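/- Let Γ be a finite simple graph whose vertex set is partitioned as V = U ⊔ W, and suppose there exist subsets u ⊆ U and w ⊆ W such that the set of edges of Γ joining a vertex of U to a vertex of W is exactly { xy : x ∈ u, y ∈ w } (a complete bipartite connection between u and w). Let o be an orientation of Γ directing every such crossing edge from its endpoint in U to its endpoint in W, and let o′ be the orientation obtained from o by reversing the direction of every edge with both endpoints in W (all other edges unchanged). Then for every k ≥ 2, the sum of the signs of all 2k-cycles of Γ with respect to o equals the sum of the signs of all 2k-cycles of Γ with respect to o′. -/

import Mathlib

open Finset
open scoped Classical

/-- The cyclic successor of an element of `Fin m`. -/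
def cyclicSucc {m : ℕ} (a : Fin m) : Fin m :=
  ⟨((a : ℕ) + 1) % m, Nat.mod_lt _ a.pos⟩

/-- The cyclic predecessor of an element of `Fin m`. -/
def cyclicPred {m : ℕ} (a : Fin m) : Fin m :=
  ⟨((a : ℕ) + (m - 1)) % m, Nat.mod_lt _ a.pos⟩

/-- `f : Fin l → V` traces an `l`-cycle of `G`: it is injective and cyclically
consecutive vertices are adjacent. -/
def IsCycleMap {V : Type} (G : SimpleGraph V) (l : ℕ) (f : Fin l → V) : Prop :=
  Function.Injective f ∧ ∀ i : Fin l, G.Adj (f i) (f (cyclicSucc i))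

/-- The number `E_l(G)` of `l`-cycles of `G`, counted up to rotation and reflection
(each such cycle is traced by exactly `2 * l` maps `Fin l → V`). -/
noncomputable def cycleCount {V : Type} [Fintype V] (G : SimpleGraph V) (l : ℕ) : ℕ :=
  (Finset.univ.filter (fun f : Fin l → V => IsCycleMap G l f)).card / (2 * l)

/-- `o` is an orientation of `G`: every edge gets exactly one direction. -/
def IsOrientation {V : Type} (G : SimpleGraph V) (o : V → V → Prop) : Prop :=
  ∀ ⦃x y : V⦄, G.Adj x y → (o x y ↔ ¬ o y x)

/-- The sign of a cycle map with respect to a direction relation `o`: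
`+1` iff the number of edges agreeing with the traversal is even. -/
noncomputable def cycleSign {V : Type} {l : ℕ} (o : V → V → Prop) (f : Fin l → V) : ℤ :=
  (-1) ^ (Finset.univ.filter (fun i : Fin l => o (f i) (f (cyclicSucc i)))).card

/-- The sum of signs of all `l`-cycles of `G` (counted up to rotation and
reflection) with respect to the direction relation `o`. -/
noncomputable def signedCycleSum {V : Type} [Fintype V] (G : SimpleGraph V)
    (o : V → V → Prop) (l : ℕ) : ℤ :=
  (∑ f ∈ Finset.univ.filter (fun f : Fin l → V => IsCycleMap G l f),
    cycleSign o f) / (2 * (l : ℤ))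

/-- The graph `Γ'_AB`: toggle the adjacency between the vertices `A` and `B`. -/
def toggleEdge {V : Type} (G : SimpleGraph V) (A B : V) : SimpleGraph V where
  Adj x y := x ≠ y ∧ (G.Adj x y ↔ ¬((x = A ∧ y = B) ∨ (x = B ∧ y = A)))
  symm := by
    constructor
    intro x y h
    obtain ⟨h1, h2⟩ := h
    refine ⟨h1.symm, ?_⟩
    rw [G.adj_comm]
    tauto
  loopless := ⟨fun x h => h.1 rfl⟩

/-- The graph `Γ̃_AB`: toggle the adjacency between `A` and every vertex
`C ∉ {A, B}` adjacent to `B` in `Γ`. -/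
def tildeGraph {V : Type} (G : SimpleGraph V) (A B : V) : SimpleGraph V where
  Adj x y := x ≠ y ∧
    (G.Adj x y ↔ ¬((x = A ∧ y ≠ B ∧ G.Adj y B) ∨ (y = A ∧ x ≠ B ∧ G.Adj x B)))
  symm := by
    constructor
    intro x y h
    obtain ⟨h1, h2⟩ := h
    refine ⟨h1.symm, ?_⟩
    rw [G.adj_comm]
    tauto
  loopless := ⟨fun x h => h.1 rfl⟩

/-- A chord diagram of order `n`: a partition of the `2 * n` cyclically ordered
points `0, 1, …, 2n - 1` into `n` two-element blocks (chords), here recorded by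
the function assigning to each point its chord. -/
structure ChordDiagram (n : ℕ) where
  chord : Fin (2 * n) → Fin n
  fiber_two : ∀ i : Fin n, (Finset.univ.filter (fun x => chord x = i)).card = 2

namespace ChordDiagram

variable {n : ℕ}

/-- The pair of endpoints of the chord `i`. -/
def endpoints (d : ChordDiagram n) (i : Fin n) : Finset (Fin (2 * n)) :=
  Finset.univ.filter (fun x => d.chord x = i)

lemma endpoints_nonempty (d : ChordDiagram n) (i : Fin n) : (d.endpoints i).Nonempty := by
  rw [← Finset.card_pos, endpoints, d.fiber_two]
  norm_num

/-- The smaller endpoint of the chord `i`. -/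
def lo (d : ChordDiagram n) (i : Fin n) : Fin (2 * n) :=
  (d.endpoints i).min' (d.endpoints_nonempty i)

/-- The larger endpoint of the chord `i`. -/
def hi (d : ChordDiagram n) (i : Fin n) : Fin (2 * n) :=
  (d.endpoints i).max' (d.endpoints_nonempty i)

/-- Chords `i` and `j` cross: exactly one endpoint of `j` lies strictly between
the two endpoints of `i`. -/
def Crosses (d : ChordDiagram n) (i j : Fin n) : Prop :=
  Xor' (d.lo i < d.lo j ∧ d.lo j < d.hi i) (d.lo i < d.hi j ∧ d.hi j < d.hi i)

/-- The intersection graph `γ(d)` of the chord diagram `d`. -/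
def interGraph (d : ChordDiagram n) : SimpleGraph (Fin n) where
  Adj i j := i ≠ j ∧ (d.Crosses i j ∨ d.Crosses j i)
  symm := ⟨fun i j h => ⟨h.1.symm, h.2.symm⟩⟩
  loopless := ⟨fun i h => h.1 rfl⟩

lemma chord_lo (d : ChordDiagram n) (i : Fin n) : d.chord (d.lo i) = i := by
  have h := (d.endpoints i).min'_mem (d.endpoints_nonempty i)
  exact (Finset.mem_filter.mp h).2

/-- An orientation of a chord diagram: a choice of a beginning point for each
chord (the other endpoint being its end). -/
def Orientation (d : ChordDiagram n) : Type :=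
  { b : Fin n → Fin (2 * n) // ∀ i, d.chord (b i) = i }

/-- The end of the chord `i`, i.e. its endpoint other than the beginning. -/
def endOf (d : ChordDiagram n) (o : d.Orientation) (i : Fin n) : Fin (2 * n) :=
  if o.1 i = d.lo i then d.hi i else d.lo i

/-- The point `z` lies on the arc going in the positive direction from `a` to `b`. -/
def InArc {m : ℕ} (a b z : Fin m) : Prop :=
  if a < b then a < z ∧ z < b else a < z ∨ z < b

/-- The direction induced by an orientation of the chords on the edges of the
intersection graph: the edge between `i` and `j` is directed from `i` to `j`
iff the beginning of `j` lies on the arc going in the positive direction from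
the beginning of `i` to the end of `i`. -/
def dir (d : ChordDiagram n) (o : d.Orientation) (i j : Fin n) : Prop :=
  InArc (o.1 i) (d.endOf o i) (o.1 j)

/-- The canonical orientation: every chord begins at its smaller endpoint. -/
def canonical (d : ChordDiagram n) : d.Orientation :=
  ⟨d.lo, d.chord_lo⟩

end ChordDiagram

/-- The weight system `R_k`: the sum of the signs of the `2k`-cycles of the
directed intersection graph (for the canonical orientation of the chords). -/
noncomputable def Rk (k : ℕ) {n : ℕ} (d : ChordDiagram n) : ℤ :=
  signedCycleSum d.interGraph (d.dir d.canonical) (2 * k)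

/-- When the point at position `p` is moved to position `q` (keeping the relative
order of all the other points), `moveFun p q r` is the old position of the point
occupying the position `r` after the move. -/
def moveFun {m : ℕ} (p q : Fin m) (r : Fin m) : Fin m :=
  if r = q then p
  else if h : (p : ℕ) ≤ (r : ℕ) ∧ (r : ℕ) < (q : ℕ) then
    ⟨(r : ℕ) + 1, by have := q.isLt; omega⟩
  else if h' : (q : ℕ) < (r : ℕ) ∧ (r : ℕ) ≤ (p : ℕ) then
    ⟨(r : ℕ) - 1, by have := r.isLt; omega⟩
  else r

/-- The invariant `w_C`: `1` if the adjacency matrix of the graph over `ZMod 2`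
is nondegenerate, `0` otherwise. -/
noncomputable def wC {V : Type} [Fintype V] (G : SimpleGraph V) : ℤ :=
  if (G.adjMatrix (ZMod 2)).det ≠ 0 then 1 else 0

/-- All set partitions of `Fin n` into nonempty blocks. -/
noncomputable def finPartitions (n : ℕ) : Finset (Finset (Finset (Fin n))) :=
  Finset.univ.filter (fun P =>
    (∀ s ∈ P, s.Nonempty) ∧ ∀ x : Fin n, ∃! s, s ∈ P ∧ x ∈ s)

/-- A `4`-invariant of finite simple graphs: an integer-valued, isomorphism
invariant function satisfying the `4`-term relation for graphs. -/
structure FourInvariant where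
  val : ∀ n : ℕ, SimpleGraph (Fin n) → ℤ
  iso_invariant : ∀ {n m : ℕ} (G : SimpleGraph (Fin n)) (H : SimpleGraph (Fin m)),
    Nonempty (G ≃g H) → val n G = val m H
  four_term : ∀ (n : ℕ) (G : SimpleGraph (Fin n)) (A B : Fin n), A ≠ B →
    val n G - val n (toggleEdge G A B) =
      val n (tildeGraph G A B) - val n (toggleEdge (tildeGraph G A B) A B)

/-- The `5`-wheel: a `5`-cycle on the vertices `0, …, 4` together with the hub `5`
adjacent to all five cycle vertices. -/
def wheel5 : SimpleGraph (Fin 6) :=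
  SimpleGraph.fromRel (fun x y =>
    ((x : ℕ) = 5 ∧ (y : ℕ) < 5) ∨
    ((x : ℕ) < 5 ∧ (y : ℕ) < 5 ∧ (y : ℕ) = ((x : ℕ) + 1) % 5))

/-- The triangular prism: two triangles `{0, 1, 2}` and `{3, 4, 5}` joined by the
perfect matching `i — i + 3`. -/
def prism : SimpleGraph (Fin 6) :=
  SimpleGraph.fromRel (fun x y =>
    ((x : ℕ) < 3 ∧ (y : ℕ) < 3 ∧ x ≠ y) ∨
    (3 ≤ (x : ℕ) ∧ 3 ≤ (y : ℕ) ∧ x ≠ y) ∨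
    ((y : ℕ) = (x : ℕ) + 3))

/-!
Let `T = reverseRuns U` reverse every maximal run of consecutive vertices of a cycle that lie
outside `U`, keeping the vertices in `U` in place. Since the crossing edges form the complete
bipartite graph between `u` and `w`, the two ends of a run are interchangeable, so `T` maps
cycles to cycles; it is moreover an involution. The crossing edges of `T f` sit at the same
positions and point from `U` to `W` just as in `f`, while every edge of `f` inside `W` is
traversed backwards in `T f`. Hence the `o`-sign of `T f` is the `o'`-sign of `f`, and summing
over the bijection `T` gives the claim. (On a cycle inside `W`, `T` is the identity and `o'`
reverses all `2k` edges, an even number.)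
-/

open Fin.NatCast Fin.CommRing

lemma cyclicSucc_eq_add_one {m : ℕ} [NeZero m] (a : Fin m) : cyclicSucc a = a + 1 := by
  apply Fin.ext
  simp only [cyclicSucc, Fin.add_def, Fin.val_one']
  rw [Nat.add_mod a.val 1 m, Nat.add_mod a.val (1 % m) m, Nat.mod_mod_of_dvd _ dvd_rfl]

section RunReflection

variable {m : ℕ} [NeZero m]

noncomputable def nextDist (p : Fin m → Prop) (i : Fin m) : ℕ :=
  if h : ∃ t : ℕ, 0 < t ∧ p (i + t) then Nat.find h else 0

noncomputable def prevDist (p : Fin m → Prop) (i : Fin m) : ℕ :=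
  nextDist (fun j => p (-j)) (-i)

/-- Reverses every maximal cyclic run of consecutive positions outside `p`, fixing the
positions in `p`: the run strictly between `i - prevDist p i` and `i + nextDist p i`
is mirrored. -/
noncomputable def reflectRuns (p : Fin m → Prop) (i : Fin m) : Fin m :=
  if p i then i else i - prevDist p i + nextDist p i

variable {p : Fin m → Prop}

lemma exists_pos_add_of_exists (hp : ∃ j, p j) (i : Fin m) :
    ∃ t : ℕ, 0 < t ∧ p (i + t) := by
  obtain ⟨j, hj⟩ := hp
  refine ⟨(j - i).val + m, by have := NeZero.pos m; omega, ?_⟩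
  have hcast : (((j - i).val + m : ℕ) : Fin m) = j - i := by
    push_cast [Fin.cast_val_eq_self, Fin.natCast_self]
    ring
  rwa [hcast, add_sub_cancel]

lemma nextDist_eq_iff (hp : ∃ j, p j) {i : Fin m} {n : ℕ} :
    nextDist p i = n ↔ 0 < n ∧ p (i + n) ∧ ∀ t : ℕ, 0 < t → t < n → ¬ p (i + t) := by
  have h := exists_pos_add_of_exists hp i
  rw [nextDist, dif_pos h, Nat.find_eq_iff, and_assoc]
  refine and_congr_right fun _ => and_congr_right fun _ => ?_
  exact forall_congr' fun t => by tauto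

lemma prevDist_eq_iff (hp : ∃ j, p j) {i : Fin m} {n : ℕ} :
    prevDist p i = n ↔ 0 < n ∧ p (i - n) ∧ ∀ t : ℕ, 0 < t → t < n → ¬ p (i - t) := by
  obtain ⟨j, hj⟩ := hp
  have hneg : ∀ t : Fin m, -(-i + t) = i - t := fun t => by ring
  rw [prevDist, nextDist_eq_iff ⟨-j, by simpa using hj⟩]
  simp only [hneg]

lemma nextDist_spec (hp : ∃ j, p j) (i : Fin m) :
    0 < nextDist p i ∧ p (i + nextDist p i) ∧
      ∀ t : ℕ, 0 < t → t < nextDist p i → ¬ p (i + t) :=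
  (nextDist_eq_iff hp).1 rfl

lemma prevDist_spec (hp : ∃ j, p j) (i : Fin m) :
    0 < prevDist p i ∧ p (i - prevDist p i) ∧
      ∀ t : ℕ, 0 < t → t < prevDist p i → ¬ p (i - t) :=
  (prevDist_eq_iff hp).1 rfl

lemma reflectRuns_of_pos {i : Fin m} (hi : p i) : reflectRuns p i = i := if_pos hi

lemma reflectRuns_of_neg {i : Fin m} (hi : ¬ p i) :
    reflectRuns p i = i - prevDist p i + nextDist p i := if_neg hi

lemma reflectRuns_of_forall_not (hp : ∀ j, ¬ p j) (i : Fin m) : reflectRuns p i = i := by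
  have hnext : ∀ q : Fin m → Prop, (∀ j, ¬ q j) → ∀ i, nextDist q i = 0 :=
    fun q hq i => dif_neg fun ⟨_, _, ht⟩ => hq _ ht
  rw [reflectRuns_of_neg (hp i), prevDist, hnext _ (fun j => hp (-j)), hnext _ hp]
  simp

/-- The run through `i` consists of the positions `i - prevDist p i + t` with
`0 < t < prevDist p i + nextDist p i`. -/
lemma reflectRuns_of_mem_run (hp : ∃ j, p j) {i : Fin m} (hi : ¬ p i) {t : ℕ} (ht : 0 < t)
    (htc : t < prevDist p i + nextDist p i) :
    ¬ p (i - prevDist p i + t) ∧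
      reflectRuns p (i - prevDist p i + t) = i + nextDist p i - t := by
  obtain ⟨hc, hcp, hcmin⟩ := prevDist_spec hp i
  obtain ⟨hd, hdp, hdmin⟩ := nextDist_spec hp i
  set c := prevDist p i
  set d := nextDist p i
  have hrun : ∀ s : ℕ, 0 < s → s < c + d → ¬ p (i - c + s) := by
    intro s hs hsc
    rcases le_or_gt s c with h | h
    · have e : i - c + s = i - ((c - s : ℕ) : Fin m) := by rw [Nat.cast_sub h]; ring
      rcases Nat.eq_zero_or_pos (c - s) with h0 | h0
      · rw [e, h0]; simpa using hi
      · rw [e]; exact hcmin _ h0 (by omega)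
    · have e : i - c + s = i + ((s - c : ℕ) : Fin m) := by rw [Nat.cast_sub h.le]; ring
      rw [e]; exact hdmin _ (by omega) (by omega)
  refine ⟨hrun t ht htc, ?_⟩
  have hprev : prevDist p (i - c + t) = t := by
    refine (prevDist_eq_iff hp).2 ⟨ht, by simpa using hcp, fun s hs hst => ?_⟩
    have e : i - c + t - s = i - c + ((t - s : ℕ) : Fin m) := by
      rw [Nat.cast_sub hst.le]; ring
    rw [e]; exact hrun _ (by omega) (by omega)
  have hnext : nextDist p (i - c + t) = c + d - t := by
    refine (nextDist_eq_iff hp).2 ⟨by omega, ?_, fun s hs hst => ?_⟩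
    · have e : i - c + t + ((c + d - t : ℕ) : Fin m) = i + d := by
        rw [Nat.cast_sub htc.le]; push_cast; ring
      rwa [e]
    · have e : i - c + t + s = i - c + ((t + s : ℕ) : Fin m) := by push_cast; ring
      rw [e]; exact hrun _ (by omega) (by omega)
  rw [reflectRuns_of_neg (hrun t ht htc), hprev, hnext, Nat.cast_sub htc.le]
  push_cast
  ring

lemma not_apply_reflectRuns (hp : ∃ j, p j) {i : Fin m} (hi : ¬ p i) :
    ¬ p (reflectRuns p i) := by
  have h := reflectRuns_of_mem_run hp hi (nextDist_spec hp i).1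
    (by have := (prevDist_spec hp i).1; omega)
  rw [reflectRuns_of_neg hi]
  exact h.1

lemma apply_reflectRuns_iff (i : Fin m) : p (reflectRuns p i) ↔ p i := by
  by_cases hi : p i
  · rw [reflectRuns_of_pos hi]
  by_cases hp : ∃ j, p j
  · exact iff_of_false (not_apply_reflectRuns hp hi) hi
  · rw [reflectRuns_of_forall_not (not_exists.1 hp)]

lemma reflectRuns_involutive : Function.Involutive (reflectRuns p) := by
  intro i
  by_cases hi : p i
  · rw [reflectRuns_of_pos hi, reflectRuns_of_pos hi]
  by_cases hp : ∃ j, p j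
  · have h := reflectRuns_of_mem_run hp hi (nextDist_spec hp i).1
      (by have := (prevDist_spec hp i).1; omega)
    rw [reflectRuns_of_neg hi, h.2]
    ring
  · rw [reflectRuns_of_forall_not (not_exists.1 hp), reflectRuns_of_forall_not (not_exists.1 hp)]

lemma reflectRuns_add_one_add_one (hp : ∃ j, p j) {i : Fin m} (hi : ¬ p i)
    (hi' : ¬ p (i + 1)) : reflectRuns p (i + 1) + 1 = reflectRuns p i := by
  obtain ⟨hc, -, -⟩ := prevDist_spec hp i
  obtain ⟨hd, hdp, -⟩ := nextDist_spec hp i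
  have hd2 : nextDist p i ≠ 1 := fun h => hi' (by simpa [h] using hdp)
  have e : i + 1 = i - prevDist p i + ((prevDist p i + 1 : ℕ) : Fin m) := by push_cast; ring
  rw [e, (reflectRuns_of_mem_run hp hi (by omega) (by omega)).2, reflectRuns_of_neg hi]
  push_cast
  ring

lemma apply_reflectRuns_sub_one (hp : ∃ j, p j) {i : Fin m} (hi : ¬ p i)
    (hi' : p (i + 1)) : p (reflectRuns p i - 1) := by
  have hd : nextDist p i = 1 := (nextDist_eq_iff hp).2 ⟨one_pos, by simpa using hi', by omega⟩
  have e : reflectRuns p i - 1 = i - prevDist p i := by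
    rw [reflectRuns_of_neg hi, hd]; push_cast; ring
  rw [e]
  exact (prevDist_spec hp i).2.1

lemma apply_reflectRuns_succ_add_one (hp : ∃ j, p j) {i : Fin m} (hi : p i)
    (hi' : ¬ p (i + 1)) : p (reflectRuns p (i + 1) + 1) := by
  have hc : prevDist p (i + 1) = 1 :=
    (prevDist_eq_iff hp).2 ⟨one_pos, by simpa using hi, by omega⟩
  have e : reflectRuns p (i + 1) + 1 = i + 1 + nextDist p (i + 1) := by
    rw [reflectRuns_of_neg hi', hc]; push_cast; ring
  rw [e]
  exact (nextDist_spec hp (i + 1)).2.1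

end RunReflection

theorem neg_one_pow_card_filter_eq_of_involution {ι : Type*} [Fintype ι] {S : Finset ι} {τ : ι → ι}
    (hτ : ∀ i ∈ S, τ i ∈ S) (hττ : ∀ i ∈ S, τ (τ i) = i) {P Q : ι → Prop}
    (hS : ∀ i ∈ S, Q i ↔ ¬ P (τ i)) (hSc : ∀ i ∉ S, Q i ↔ P i) :
    (-1 : ℤ) ^ #{i | Q i} = (-1) ^ #S * (-1) ^ #{i | P i} := by
  have hprod : ∀ R : ι → Prop, (-1 : ℤ) ^ #{i | R i} =
      (∏ i ∈ S, if R i then -1 else 1) * ∏ i ∈ univ.filter (· ∉ S), if R i then -1 else 1 := by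
    intro R
    rw [← prod_const, prod_filter, ← prod_filter_mul_prod_filter_not univ (· ∈ S)]
    simp
  have hinS : ∏ i ∈ S, (if Q i then -1 else 1 : ℤ) = ∏ i ∈ S, -(if P (τ i) then -1 else 1) :=
    prod_congr rfl fun i hi => by rw [hS i hi]; split_ifs <;> simp
  have hreindex : ∏ i ∈ S, (if P (τ i) then -1 else 1 : ℤ) = ∏ i ∈ S, if P i then -1 else 1 :=
    prod_nbij' τ τ hτ hτ hττ hττ fun _ _ => rfl
  have hout : ∏ i ∈ univ.filter (· ∉ S), (if Q i then -1 else 1 : ℤ) =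
      ∏ i ∈ univ.filter (· ∉ S), if P i then -1 else 1 :=
    prod_congr rfl fun i hi => by rw [hSc i (mem_filter.1 hi).2]
  rw [hprod Q, hprod P, hinS, prod_neg, hreindex, hout, mul_assoc]

section ShareReflection

variable {V : Type} {G : SimpleGraph V} {U u w : Set V} {o o' : V → V → Prop}

lemma dir_iff_mem_of_crossing (ho : IsOrientation G o)
    (hdir : ∀ x y, G.Adj x y → x ∈ U → y ∉ U → o x y) {x y : V} (hxy : G.Adj x y)
    (hcrossing : x ∈ U ↔ y ∉ U) : o x y ↔ x ∈ U := by
  by_cases hx : x ∈ U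
  · exact iff_of_true (hdir x y hxy hx (hcrossing.1 hx)) hx
  · refine iff_of_false (fun h => (ho hxy).1 h ?_) hx
    exact hdir y x hxy.symm (not_not.1 (mt hcrossing.2 hx)) hx

variable {m : ℕ} [NeZero m] {f : Fin m → V}

lemma isCycleMap_iff :
    IsCycleMap G m f ↔ Function.Injective f ∧ ∀ i, G.Adj (f i) (f (i + 1)) := by
  simp only [IsCycleMap, cyclicSucc_eq_add_one]

lemma cycleSign_eq : cycleSign o f = (-1) ^ #{i | o (f i) (f (i + 1))} := by
  simp only [cycleSign, cyclicSucc_eq_add_one]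

variable (U) in
noncomputable def edgesOutside (f : Fin m → V) : Finset (Fin m) :=
  {i | f i ∉ U ∧ f (i + 1) ∉ U}

lemma cycleSign_eq_of_flip_outside (hadj : ∀ i, G.Adj (f i) (f (i + 1)))
    (hflipW : ∀ x y, G.Adj x y → x ∉ U → y ∉ U → (o' x y ↔ ¬ o x y))
    (hkeep : ∀ x y, G.Adj x y → (x ∈ U ∨ y ∈ U) → (o' x y ↔ o x y)) :
    cycleSign o' f = (-1) ^ #(edgesOutside U f) * cycleSign o f := by
  rw [cycleSign_eq, cycleSign_eq]
  refine neg_one_pow_card_filter_eq_of_involution (τ := id) (fun i hi => hi) (fun _ _ => rfl)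
    (fun i hi => ?_) (fun i hi => ?_)
  · obtain ⟨hx, hy⟩ := (mem_filter.1 hi).2
    exact hflipW _ _ (hadj i) hx hy
  · refine hkeep _ _ (hadj i) ?_
    by_contra h
    exact hi (mem_filter.2 ⟨mem_univ _, not_or.1 h⟩)

variable (U) in
noncomputable def reverseRuns (f : Fin m → V) : Fin m → V :=
  f ∘ reflectRuns (fun j => f j ∈ U)

lemma reverseRuns_mem_iff (i : Fin m) : reverseRuns U f i ∈ U ↔ f i ∈ U :=
  apply_reflectRuns_iff (p := fun j => f j ∈ U) i

lemma reverseRuns_reverseRuns : reverseRuns U (reverseRuns U f) = f := by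
  have hpattern : (fun j => reverseRuns U f j ∈ U) = fun j => f j ∈ U :=
    funext fun j => propext (reverseRuns_mem_iff j)
  funext i
  show reverseRuns U f (reflectRuns (fun j => reverseRuns U f j ∈ U) i) = f i
  rw [hpattern]
  exact congrArg f (reflectRuns_involutive (p := fun j => f j ∈ U) i)

lemma reverseRuns_of_forall_not_mem (hU : ∀ i, f i ∉ U) : reverseRuns U f = f :=
  funext fun i => congrArg f (reflectRuns_of_forall_not hU i)

lemma reverseRuns_adj (hcross : ∀ x y, G.Adj x y → x ∈ U → y ∉ U → x ∈ u ∧ y ∈ w)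
    (hcomplete : ∀ x ∈ u, ∀ y ∈ w, G.Adj x y) (hadj : ∀ i, G.Adj (f i) (f (i + 1)))
    (hU : ∃ i, f i ∈ U) (i : Fin m) :
    G.Adj (reverseRuns U f i) (reverseRuns U f (i + 1)) := by
  set p : Fin m → Prop := fun j => f j ∈ U
  show G.Adj (f (reflectRuns p i)) (f (reflectRuns p (i + 1)))
  have hedge : ∀ j, G.Adj (f (j - 1)) (f j) := fun j => by simpa using hadj (j - 1)
  by_cases h0 : p i <;> by_cases h1 : p (i + 1)
  · rw [reflectRuns_of_pos h0, reflectRuns_of_pos h1]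
    exact hadj i
  · rw [reflectRuns_of_pos h0]
    have hj : p (reflectRuns p (i + 1) + 1) := apply_reflectRuns_succ_add_one hU h0 h1
    exact hcomplete _ (hcross _ _ (hadj i) h0 h1).1 _
      (hcross _ _ (hadj _).symm hj (not_apply_reflectRuns hU h1)).2
  · rw [reflectRuns_of_pos h1]
    have hj : p (reflectRuns p i - 1) := apply_reflectRuns_sub_one hU h0 h1
    exact (hcomplete _ (hcross _ _ (hadj i).symm h1 h0).1 _
      (hcross _ _ (hedge _) hj (not_apply_reflectRuns hU h0)).2).symm
  · rw [← reflectRuns_add_one_add_one hU h0 h1]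
    exact (hadj _).symm

lemma isCycleMap_reverseRuns (hcross : ∀ x y, G.Adj x y → x ∈ U → y ∉ U → x ∈ u ∧ y ∈ w)
    (hcomplete : ∀ x ∈ u, ∀ y ∈ w, G.Adj x y) (hf : IsCycleMap G m f) :
    IsCycleMap G m (reverseRuns U f) := by
  rw [isCycleMap_iff] at hf ⊢
  refine ⟨hf.1.comp reflectRuns_involutive.injective, ?_⟩
  by_cases hU : ∃ i, f i ∈ U
  · exact reverseRuns_adj hcross hcomplete hf.2 hU
  · rw [reverseRuns_of_forall_not_mem (not_exists.1 hU)]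
    exact hf.2

lemma dir_reverseRuns_iff_of_not_mem (ho : IsOrientation G o)
    (hdir : ∀ x y, G.Adj x y → x ∈ U → y ∉ U → o x y) (hadj : ∀ i, G.Adj (f i) (f (i + 1)))
    (hTadj : ∀ i, G.Adj (reverseRuns U f i) (reverseRuns U f (i + 1))) {i : Fin m}
    (hi : i ∉ edgesOutside U f) :
    o (reverseRuns U f i) (reverseRuns U f (i + 1)) ↔ o (f i) (f (i + 1)) := by
  set p : Fin m → Prop := fun j => f j ∈ U
  have hcrossing : (p i ∧ p (i + 1)) ∨ (p i ↔ ¬ p (i + 1)) := by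
    by_contra h
    exact hi (mem_filter.2 ⟨mem_univ _, by tauto⟩)
  rcases hcrossing with ⟨h0, h1⟩ | hcrossing
  · show o (f (reflectRuns p i)) (f (reflectRuns p (i + 1))) ↔ _
    rw [reflectRuns_of_pos h0, reflectRuns_of_pos h1]
  · rw [dir_iff_mem_of_crossing ho hdir (hTadj i), dir_iff_mem_of_crossing ho hdir (hadj i),
      reverseRuns_mem_iff]
    · exact hcrossing
    · rwa [reverseRuns_mem_iff, reverseRuns_mem_iff]

lemma cycleSign_reverseRuns (hm : Even m)
    (hcross : ∀ x y, G.Adj x y → x ∈ U → y ∉ U → x ∈ u ∧ y ∈ w)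
    (hcomplete : ∀ x ∈ u, ∀ y ∈ w, G.Adj x y) (ho : IsOrientation G o)
    (hdir : ∀ x y, G.Adj x y → x ∈ U → y ∉ U → o x y) (hadj : ∀ i, G.Adj (f i) (f (i + 1))) :
    cycleSign o (reverseRuns U f) = (-1) ^ #(edgesOutside U f) * cycleSign o f := by
  by_cases hU : ∃ i, f i ∈ U
  swap
  · have hall : edgesOutside U f = univ :=
      filter_true_of_mem fun i _ => ⟨not_exists.1 hU i, not_exists.1 hU (i + 1)⟩
    rw [reverseRuns_of_forall_not_mem (not_exists.1 hU), hall, card_univ, Fintype.card_fin,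
      hm.neg_one_pow, one_mul]
  set p : Fin m → Prop := fun j => f j ∈ U
  have hTadj := reverseRuns_adj hcross hcomplete hadj hU
  have hS : ∀ i ∈ edgesOutside U f, ¬ p i ∧ ¬ p (i + 1) := fun i hi => (mem_filter.1 hi).2
  have hshift : ∀ i ∈ edgesOutside U f, reflectRuns p (i + 1) + 1 = reflectRuns p i :=
    fun i hi => reflectRuns_add_one_add_one hU (hS i hi).1 (hS i hi).2
  rw [cycleSign_eq, cycleSign_eq]
  -- an edge inside a run is traversed backwards, at the mirrored position
  refine neg_one_pow_card_filter_eq_of_involution (τ := fun i => reflectRuns p (i + 1))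
    (fun i hi => mem_filter.2 ⟨mem_univ _, not_apply_reflectRuns hU (hS i hi).2, ?inside⟩)
    (fun i hi => by simp only [hshift i hi, reflectRuns_involutive i])
    (fun i hi => ?reversed) (fun i hi => ?kept)
  case inside =>
    rw [hshift i hi]
    exact not_apply_reflectRuns hU (hS i hi).1
  case reversed =>
    show o (f (reflectRuns p i)) (f (reflectRuns p (i + 1))) ↔ _
    rw [← hshift i hi]
    exact ho (hadj _).symm
  case kept => exact dir_reverseRuns_iff_of_not_mem ho hdir hadj hTadj hi

theorem sum_cycleSign_eq_of_share_reflection [Fintype V] (hm : Even m)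
    (hcross : ∀ x y, G.Adj x y → x ∈ U → y ∉ U → x ∈ u ∧ y ∈ w)
    (hcomplete : ∀ x ∈ u, ∀ y ∈ w, G.Adj x y) (ho : IsOrientation G o)
    (hdir : ∀ x y, G.Adj x y → x ∈ U → y ∉ U → o x y)
    (hflipW : ∀ x y, G.Adj x y → x ∉ U → y ∉ U → (o' x y ↔ ¬ o x y))
    (hkeep : ∀ x y, G.Adj x y → (x ∈ U ∨ y ∈ U) → (o' x y ↔ o x y)) :
    ∑ f ∈ univ.filter (IsCycleMap G m), cycleSign o f =
      ∑ f ∈ univ.filter (IsCycleMap G m), cycleSign o' f := by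
  set cycles := univ.filter (IsCycleMap G m)
  have hmaps : ∀ f ∈ cycles, reverseRuns U f ∈ cycles := fun f hf =>
    mem_filter.2 ⟨mem_univ _, isCycleMap_reverseRuns hcross hcomplete (mem_filter.1 hf).2⟩
  calc ∑ f ∈ cycles, cycleSign o f
      = ∑ f ∈ cycles, cycleSign o (reverseRuns U f) :=
        (sum_nbij' _ _ hmaps hmaps (fun _ _ => reverseRuns_reverseRuns)
          (fun _ _ => reverseRuns_reverseRuns) fun _ _ => rfl).symm
    _ = ∑ f ∈ cycles, cycleSign o' f := by
        refine sum_congr rfl fun f hf => ?_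
        have hadj := (isCycleMap_iff.1 (mem_filter.1 hf).2).2
        rw [cycleSign_reverseRuns hm hcross hcomplete ho hdir hadj,
          cycleSign_eq_of_flip_outside hadj hflipW hkeep]

end ShareReflection

theorem signedCycleSum_eq_of_share_reflection_general {V : Type} [Fintype V]
    (G : SimpleGraph V) (U : Set V) (u w : Set V)
    (hcross : ∀ x y, G.Adj x y → x ∈ U → y ∉ U → x ∈ u ∧ y ∈ w)
    (hcomplete : ∀ x ∈ u, ∀ y ∈ w, G.Adj x y)
    (o o' : V → V → Prop) (ho : IsOrientation G o)
    (hdir : ∀ x y, G.Adj x y → x ∈ U → y ∉ U → o x y)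
    (hflipW : ∀ x y, G.Adj x y → x ∉ U → y ∉ U → (o' x y ↔ ¬ o x y))
    (hkeep : ∀ x y, G.Adj x y → (x ∈ U ∨ y ∈ U) → (o' x y ↔ o x y))
    (k : ℕ) :
    signedCycleSum G o (2 * k) = signedCycleSum G o' (2 * k) := by
  rcases Nat.eq_zero_or_pos k with rfl | hk
  · -- both sides are divided by `0`
    simp [signedCycleSum]
  have : NeZero (2 * k) := ⟨by omega⟩
  rw [signedCycleSum, signedCycleSum, sum_cycleSign_eq_of_share_reflection (even_two_mul k)
    hcross hcomplete ho hdir hflipW hkeep]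

theorem signedCycleSum_eq_of_share_reflection {V : Type} [Fintype V]
    (G : SimpleGraph V) (U : Set V) (u w : Set V)
    (hu : u ⊆ U) (hw : ∀ y ∈ w, y ∉ U)
    (hcross : ∀ x y, G.Adj x y → x ∈ U → y ∉ U → x ∈ u ∧ y ∈ w)
    (hcomplete : ∀ x ∈ u, ∀ y ∈ w, G.Adj x y)
    (o o' : V → V → Prop) (ho : IsOrientation G o) (ho' : IsOrientation G o')
    (hdir : ∀ x y, G.Adj x y → x ∈ U → y ∉ U → o x y)
    (hflipW : ∀ x y, G.Adj x y → x ∉ U → y ∉ U → (o' x y ↔ ¬ o x y))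
    (hkeep : ∀ x y, G.Adj x y → (x ∈ U ∨ y ∈ U) → (o' x y ↔ o x y))
    (k : ℕ) (hk : 2 ≤ k) :
    signedCycleSum G o (2 * k) = signedCycleSum G o' (2 * k) :=
  signedCycleSum_eq_of_share_reflection_general G U u w hcross hcomplete o o' ho hdir hflipW hkeep k
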